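/- arXiv:0705.3241 — 2 statements merged into one kernel-verified Lean document; each statement's English description precedes it below -/
import Mathlib

section
/- Let ℂ[s,t,s̄,t̄] be the polynomial ring in four variables and let L denote the lowering operator L = s̄·∂_t − t̄·∂_s acting on it. For homogeneous polynomials f, g ∈ ℂ[s,t] of degrees d₁ and d₂ respectively, and for every natural number k with k ≤ d₁ and k ≤ d₂, the following identity holds in ℂ[s,t,s̄,t̄]: Σ_{l=0}^{k} (−1)^l · C(k,l) · (d₁−l)! · (d₂−k+l)! · (L^l f) · (L^{k−l} g) = (d₁−k)! · (d₂−k)! · (s s̄ + t t̄)^k · Σ_{l=0}^{k} (−1)^l · C(k,l) · (∂_s^{k−l} ∂_t^l f) · (∂_s^l ∂_t^{k−l} g). In particular, on the unit three-sphere s s̄ + t t̄ = 1, the highest-weight (spin j₁+j₂−k) component of the product of the SU(2)-multiplets generated by f and g is given by the classical k-th transvectant of f and g. -/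
open MvPolynomial Finset

/- Variables of `ℂ[s,t,s̄,t̄]`: `0 ↦ s`, `1 ↦ t`, `2 ↦ s̄`, `3 ↦ t̄`. -/

/-- The embedding `ℂ[s,t] → ℂ[s,t,s̄,t̄]`. -/
noncomputable def ι : MvPolynomial (Fin 2) ℂ →ₐ[ℂ] MvPolynomial (Fin 4) ℂ :=
  rename (Fin.castLE (by norm_num))

/-- The lowering operator `L = s̄·∂_t − t̄·∂_s` on `ℂ[s,t,s̄,t̄]`. -/
noncomputable def Low (F : MvPolynomial (Fin 4) ℂ) : MvPolynomial (Fin 4) ℂ :=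
  X 2 * pderiv 1 F - X 3 * pderiv 0 F

/-- `∂_s` as a function on `ℂ[s,t,s̄,t̄]`. -/
noncomputable def Ds (F : MvPolynomial (Fin 4) ℂ) : MvPolynomial (Fin 4) ℂ := pderiv 0 F

/-- `∂_t` as a function on `ℂ[s,t,s̄,t̄]`. -/
noncomputable def Dt (F : MvPolynomial (Fin 4) ℂ) : MvPolynomial (Fin 4) ℂ := pderiv 1 F

/-!
Both sides are bilinear in `(f, g)`, and over a field of characteristic zero the forms of degree
`d` in `s, t` are spanned by the powers `ℓ ^ d` of linear forms `ℓ = α s + β t`: the coefficients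
of `(s + c t) ^ d`, a polynomial in `c` with values in the span, lie in the span themselves.
For `f = ℓ₁ ^ d₁` and `g = ℓ₂ ^ d₂` everything is explicit. `L` is a derivation with
`L ℓ = β s̄ - α t̄ =: m` and `L m = 0`, so `L^l (ℓ ^ d) = d!/(d-l)! · ℓ^(d-l) m^l`, while
`∂_s^i ∂_t^j (ℓ ^ d) = d!/(d-i-j)! · α^i β^j ℓ^(d-i-j)`. By the binomial theorem both sides become
`d₁! d₂! ℓ₁^(d₁-k) ℓ₂^(d₂-k) (ℓ₁ m₂ - ℓ₂ m₁)^k`, because `ℓ₁ m₂ - ℓ₂ m₁ = (αδ - βγ)(s s̄ + t t̄)`.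
-/

namespace Derivation

variable {R A : Type*} [CommSemiring R] [CommSemiring A] [Algebra R A] (D : Derivation R A A)

theorem iterate_apply_pow {a : A} (h : D (D a) = 0) (d l : ℕ) :
    (⇑D)^[l] (a ^ d) = d.descFactorial l * a ^ (d - l) * D a ^ l := by
  induction l with
  | zero => simp
  | succ l ih =>
    rw [Function.iterate_succ_apply', ih]
    simp only [leibniz, leibniz_pow, h, smul_eq_mul, mul_zero, nsmul_eq_mul,
      map_natCast, add_zero, zero_add, Nat.sub_sub, Nat.descFactorial_succ, Nat.cast_mul]
    ring

theorem iterate_mul_of_apply_eq_zero {c : A} (hc : D c = 0) (n : ℕ) (x : A) :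
    (⇑D)^[n] (c * x) = c * (⇑D)^[n] x := by
  induction n with
  | zero => rfl
  | succ n ih => simp [Function.iterate_succ_apply', ih, leibniz, hc]

end Derivation

theorem Nat.cast_factorial_sub_mul_descFactorial {R : Type*} [Semiring R] {n m : ℕ} (h : m ≤ n) :
    ((n - m).factorial : R) * n.descFactorial m = n.factorial := by
  rw [← Nat.cast_mul, Nat.factorial_mul_descFactorial h]

theorem sum_range_neg_one_pow_mul_choose {R : Type*} [CommRing R] (x y : R) (k : ℕ) :
    ∑ l ∈ range (k + 1), (-1) ^ l * (k.choose l : R) * x ^ (k - l) * y ^ l = (x - y) ^ k := by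
  rw [← neg_add_eq_sub, add_pow]
  refine sum_congr rfl fun l _ => ?_
  rw [neg_pow]
  ring

theorem LinearMap.eq_of_mem_span₂ {R M N P : Type*} [CommSemiring R] [AddCommMonoid M]
    [AddCommMonoid N] [AddCommMonoid P] [Module R M] [Module R N] [Module R P]
    (B B' : M →ₗ[R] N →ₗ[R] P) {s : Set M} {t : Set N}
    (h : ∀ x ∈ s, ∀ y ∈ t, B x y = B' x y) {x : M} {y : N}
    (hx : x ∈ Submodule.span R s) (hy : y ∈ Submodule.span R t) : B x y = B' x y :=
  LinearMap.eqOn_span (f := B.flip y) (g := B'.flip y)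
    (fun x' hx' => LinearMap.eqOn_span (fun y' hy' => h x' hx' y' hy') hy) hx

theorem Submodule.mem_of_forall_sum_pow_smul_mem {K M : Type*} [Field K] [Infinite K]
    [AddCommGroup M] [Module K M] {S : Submodule K M} {n : ℕ} {v : ℕ → M}
    (h : ∀ c : K, ∑ m ∈ range n, c ^ m • v m ∈ S) {m : ℕ} (hm : m < n) : v m ∈ S := by
  rw [← Submodule.Quotient.mk_eq_zero, ← Module.forall_dual_apply_eq_zero_iff K]
  intro φ
  let p : Polynomial K := ∑ i ∈ range n, Polynomial.monomial i (φ (S.mkQ (v i)))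
  have hp : p = 0 := Polynomial.funext fun c => by
    have : φ (S.mkQ (∑ m ∈ range n, c ^ m • v m)) = 0 := by
      rw [Submodule.mkQ_apply, (Submodule.Quotient.mk_eq_zero S).mpr (h c), map_zero]
    simpa [p, Polynomial.eval_finsetSum, mul_comm] using this
  simpa [p, Polynomial.finsetSum_coeff, Polynomial.coeff_monomial, hm] using
    congrArg (Polynomial.coeff · m) hp

theorem MvPolynomial.IsHomogeneous.mem_span_linearForm_pow {K : Type*} [Field K] [CharZero K]
    {f : MvPolynomial (Fin 2) K} {d : ℕ} (hf : f.IsHomogeneous d) :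
    f ∈ Submodule.span K (Set.range fun p : K × K => (C p.1 * X 0 + C p.2 * X 1) ^ d) := by
  set S := Submodule.span K
    (Set.range fun p : K × K => (C p.1 * X 0 + C p.2 * X 1 : MvPolynomial (Fin 2) K) ^ d)
  rw [← mem_homogeneousSubmodule, homogeneousSubmodule_eq_finsupp_supported,
    AddMonoidAlgebra.supported_eq_span_single] at hf
  refine Submodule.span_le.mpr ?_ hf
  rintro _ ⟨m, hm, rfl⟩
  have hm : m 1 + m 0 = d := by simpa [Finsupp.degree_eq_sum, add_comm] using hm
  have hbinom (c : K) :
      ∑ j ∈ range (d + 1), c ^ j • ((d.choose j : K) • (X 1 ^ j * X 0 ^ (d - j))) ∈ S := by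
    have : (C 1 * X 0 + C c * X 1) ^ d ∈ S := Submodule.subset_span ⟨(1, c), rfl⟩
    convert this using 1
    rw [map_one, one_mul, add_comm (X 0), add_pow]
    refine sum_congr rfl fun j _ => ?_
    simp only [smul_eq_C_mul, mul_pow, ← map_pow, map_natCast]
    ring
  have := Submodule.mem_of_forall_sum_pow_smul_mem hbinom (m := m 1) (by omega)
  rw [Submodule.smul_mem_iff _ (by exact_mod_cast (Nat.choose_pos (by omega)).ne'), ← hm,
    Nat.add_sub_cancel_left] at this
  change (monomial m 1 : MvPolynomial (Fin 2) K) ∈ S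
  rwa [monomial_eq, Finsupp.prod_fintype _ _ (by simp), Fin.prod_univ_two, C_1, one_mul, mul_comm]

noncomputable def lowering : Derivation ℂ (MvPolynomial (Fin 4) ℂ) (MvPolynomial (Fin 4) ℂ) :=
  (X 2 : MvPolynomial (Fin 4) ℂ) • pderiv 1 - (X 3 : MvPolynomial (Fin 4) ℂ) • pderiv 0

theorem coe_lowering : ⇑lowering = Low := by
  funext F
  simp [lowering, Low]

theorem coe_pderiv_zero : ⇑(pderiv 0 : Derivation ℂ (MvPolynomial (Fin 4) ℂ) _) = Ds := rfl

theorem coe_pderiv_one : ⇑(pderiv 1 : Derivation ℂ (MvPolynomial (Fin 4) ℂ) _) = Dt := rfl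

noncomputable def loweringProduct (d₁ d₂ k : ℕ) :
    MvPolynomial (Fin 2) ℂ →ₗ[ℂ] MvPolynomial (Fin 2) ℂ →ₗ[ℂ] MvPolynomial (Fin 4) ℂ :=
  ∑ l ∈ range (k + 1), ((-1) ^ l * k.choose l * (d₁ - l).factorial * (d₂ - k + l).factorial : ℂ) •
    (LinearMap.mul ℂ _).compl₁₂ ((lowering.toLinearMap ^ l) ∘ₗ ι.toLinearMap)
      ((lowering.toLinearMap ^ (k - l)) ∘ₗ ι.toLinearMap)

noncomputable def transvectant (k : ℕ) :
    MvPolynomial (Fin 2) ℂ →ₗ[ℂ] MvPolynomial (Fin 2) ℂ →ₗ[ℂ] MvPolynomial (Fin 4) ℂ :=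
  ∑ l ∈ range (k + 1), ((-1) ^ l * k.choose l : ℂ) •
    (LinearMap.mul ℂ _).compl₁₂
      (((pderiv 0).toLinearMap ^ (k - l) * (pderiv 1).toLinearMap ^ l) ∘ₗ ι.toLinearMap)
      (((pderiv 0).toLinearMap ^ l * (pderiv 1).toLinearMap ^ (k - l)) ∘ₗ ι.toLinearMap)

theorem loweringProduct_apply (d₁ d₂ k : ℕ) (f g : MvPolynomial (Fin 2) ℂ) :
    loweringProduct d₁ d₂ k f g =
      ∑ l ∈ range (k + 1),
        (-1 : MvPolynomial (Fin 4) ℂ) ^ l * (k.choose l : MvPolynomial (Fin 4) ℂ) *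
          ((d₁ - l).factorial : MvPolynomial (Fin 4) ℂ) *
          ((d₂ - k + l).factorial : MvPolynomial (Fin 4) ℂ) *
          (Low^[l] (ι f)) * (Low^[k - l] (ι g)) := by
  simp [loweringProduct, Module.End.coe_pow, coe_lowering, Algebra.smul_def, mul_assoc]

theorem transvectant_apply (k : ℕ) (f g : MvPolynomial (Fin 2) ℂ) :
    transvectant k f g =
      ∑ l ∈ range (k + 1),
        (-1 : MvPolynomial (Fin 4) ℂ) ^ l * (k.choose l : MvPolynomial (Fin 4) ℂ) *
          (Ds^[k - l] (Dt^[l] (ι f))) * (Ds^[l] (Dt^[k - l] (ι g))) := by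
  simp [transvectant, Module.End.coe_pow, Algebra.smul_def, mul_assoc, coe_pderiv_zero,
    coe_pderiv_one]

section LinearForm

variable (α β : ℂ)

theorem ι_linearForm : ι (C α * X 0 + C β * X 1) = C α * X 0 + C β * X 1 := by
  simp [ι]

theorem lowering_linearForm :
    lowering (C α * X 0 + C β * X 1) = C β * X 2 - C α * X 3 := by
  simp [coe_lowering, Low, pderiv_X, mul_comm]

theorem lowering_lowering_linearForm : lowering (lowering (C α * X 0 + C β * X 1)) = 0 := by
  simp [lowering_linearForm, coe_lowering, Low, pderiv_X]

theorem iterate_lowering_linearForm_pow (d l : ℕ) :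
    Low^[l] ((C α * X 0 + C β * X 1) ^ d) =
      (d.descFactorial l : MvPolynomial (Fin 4) ℂ) * (C α * X 0 + C β * X 1) ^ (d - l) *
        (C β * X 2 - C α * X 3) ^ l := by
  rw [← coe_lowering, lowering.iterate_apply_pow (lowering_lowering_linearForm α β),
    lowering_linearForm]

theorem iterate_pderiv_linearForm_pow (d i j : ℕ) :
    Ds^[i] (Dt^[j] ((C α * X 0 + C β * X 1) ^ d)) =
      (d.descFactorial (i + j) : MvPolynomial (Fin 4) ℂ) * (C α * X 0 + C β * X 1) ^ (d - (i + j))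
        * C α ^ i * C β ^ j := by
  have hs : pderiv 0 (C α * X 0 + C β * X 1 : MvPolynomial (Fin 4) ℂ) = C α := by simp [pderiv_X]
  have ht : pderiv 1 (C α * X 0 + C β * X 1 : MvPolynomial (Fin 4) ℂ) = C β := by simp [pderiv_X]
  rw [← coe_pderiv_zero, ← coe_pderiv_one, (pderiv 1).iterate_apply_pow (by simp [ht]), ht,
    mul_right_comm, (pderiv 0).iterate_mul_of_apply_eq_zero (by simp),
    (pderiv 0).iterate_apply_pow (by simp [hs]), hs,
    ← Nat.descFactorial_mul_descFactorial (Nat.le_add_left j i), Nat.add_sub_cancel, Nat.sub_sub,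
    add_comm j i]
  push_cast
  ring

end LinearForm

theorem loweringProduct_linearForm_pow {d₁ d₂ k : ℕ} (hk₁ : k ≤ d₁) (hk₂ : k ≤ d₂) (α β γ δ : ℂ) :
    loweringProduct d₁ d₂ k ((C α * X 0 + C β * X 1) ^ d₁) ((C γ * X 0 + C δ * X 1) ^ d₂) =
      (d₁.factorial * d₂.factorial : MvPolynomial (Fin 4) ℂ) * (C α * X 0 + C β * X 1) ^ (d₁ - k) *
        (C γ * X 0 + C δ * X 1) ^ (d₂ - k) *
        ((C α * X 0 + C β * X 1) * (C δ * X 2 - C γ * X 3) -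
          (C γ * X 0 + C δ * X 1) * (C β * X 2 - C α * X 3)) ^ k := by
  rw [loweringProduct_apply, map_pow, map_pow, ι_linearForm, ι_linearForm]
  simp only [iterate_lowering_linearForm_pow]
  generalize (C α * X 0 + C β * X 1 : MvPolynomial (Fin 4) ℂ) = u₁,
    (C γ * X 0 + C δ * X 1 : MvPolynomial (Fin 4) ℂ) = u₂,
    (C β * X 2 - C α * X 3 : MvPolynomial (Fin 4) ℂ) = w₁,
    (C δ * X 2 - C γ * X 3 : MvPolynomial (Fin 4) ℂ) = w₂
  rw [← sum_range_neg_one_pow_mul_choose, mul_sum]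
  refine sum_congr rfl fun l hl => ?_
  have hl : l ≤ k := mem_range_succ_iff.mp hl
  rw [← Nat.cast_factorial_sub_mul_descFactorial (hl.trans hk₁),
    ← Nat.cast_factorial_sub_mul_descFactorial ((Nat.sub_le k l).trans hk₂),
    show d₂ - (k - l) = d₂ - k + l by omega, show d₁ - l = d₁ - k + (k - l) by omega]
  ring

theorem transvectant_linearForm_pow (d₁ d₂ k : ℕ) (α β γ δ : ℂ) :
    transvectant k ((C α * X 0 + C β * X 1) ^ d₁) ((C γ * X 0 + C δ * X 1) ^ d₂) =
      (d₁.descFactorial k * d₂.descFactorial k : MvPolynomial (Fin 4) ℂ) *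
        (C α * X 0 + C β * X 1) ^ (d₁ - k) * (C γ * X 0 + C δ * X 1) ^ (d₂ - k) *
        (C α * C δ - C β * C γ) ^ k := by
  rw [transvectant_apply, map_pow, map_pow, ι_linearForm, ι_linearForm,
    ← sum_range_neg_one_pow_mul_choose, mul_sum]
  refine sum_congr rfl fun l hl => ?_
  have hl : l ≤ k := mem_range_succ_iff.mp hl
  rw [iterate_pderiv_linearForm_pow, iterate_pderiv_linearForm_pow, Nat.sub_add_cancel hl,
    Nat.add_sub_cancel' hl]
  ring

/-- The combination of the multiplets generated by two homogeneous polynomials `f`, `g`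
of `ℂ[s,t]` via lowering operators equals `(s s̄ + t t̄)^k` times the `k`-th transvectant. -/
theorem multiplet_product_transvectant (d₁ d₂ k : ℕ) (hk₁ : k ≤ d₁) (hk₂ : k ≤ d₂)
    (f g : MvPolynomial (Fin 2) ℂ)
    (hf : f.IsHomogeneous d₁) (hg : g.IsHomogeneous d₂) :
    ∑ l ∈ range (k + 1),
        (-1 : MvPolynomial (Fin 4) ℂ) ^ l * (k.choose l : MvPolynomial (Fin 4) ℂ) *
          ((d₁ - l).factorial : MvPolynomial (Fin 4) ℂ) *
          ((d₂ - k + l).factorial : MvPolynomial (Fin 4) ℂ) *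
          (Low^[l] (ι f)) * (Low^[k - l] (ι g)) =
      ((d₁ - k).factorial : MvPolynomial (Fin 4) ℂ) *
        ((d₂ - k).factorial : MvPolynomial (Fin 4) ℂ) *
        (X 0 * X 2 + X 1 * X 3) ^ k *
        ∑ l ∈ range (k + 1),
          (-1 : MvPolynomial (Fin 4) ℂ) ^ l * (k.choose l : MvPolynomial (Fin 4) ℂ) *
            (Ds^[k - l] (Dt^[l] (ι f))) * (Ds^[l] (Dt^[k - l] (ι g))) := by
  rw [← loweringProduct_apply, ← transvectant_apply]
  refine LinearMap.eq_of_mem_span₂ (loweringProduct d₁ d₂ k)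
    ((transvectant k).compr₂ (LinearMap.mulLeft ℂ _)) ?_ hf.mem_span_linearForm_pow
    hg.mem_span_linearForm_pow
  rintro _ ⟨⟨α, β⟩, rfl⟩ _ ⟨⟨γ, δ⟩, rfl⟩
  have hdet : (C α * X 0 + C β * X 1) * (C δ * X 2 - C γ * X 3) -
      (C γ * X 0 + C δ * X 1) * (C β * X 2 - C α * X 3) =
        (C α * C δ - C β * C γ) * (X 0 * X 2 + X 1 * X 3 : MvPolynomial (Fin 4) ℂ) := by
    ring
  rw [LinearMap.compr₂_apply, LinearMap.mulLeft_apply, loweringProduct_linearForm_pow hk₁ hk₂,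
    transvectant_linearForm_pow, hdet, mul_pow, ← Nat.cast_factorial_sub_mul_descFactorial hk₁,
    ← Nat.cast_factorial_sub_mul_descFactorial hk₂]
  ring
end

section
/- Let n ≥ 1 be a natural number and let ζ ∈ ℂ be a primitive n-th root of unity. Let σ be the ℂ-algebra automorphism of ℂ[s,t] determined by σ(s) = ζ·s and σ(t) = ζ⁻¹·t (the action of the cyclic group ℤ/n ⊂ SU(2)). Then a polynomial f ∈ ℂ[s,t] satisfies σ(f) = f if and only if f belongs to the ℂ-subalgebra generated by the three polynomials s·t, s^n, and t^n. In other words, the ring of invariants of this ℤ/n-action equals Algebra.adjoin ℂ {st, s^n, t^n}. -/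
open MvPolynomial

/- Variables of `ℂ[s,t]`: `0 ↦ s`, `1 ↦ t`. -/

/-- The action of the generator of `ℤ/n ⊂ SU(2)`: the algebra endomorphism of `ℂ[s,t]`
determined by `s ↦ ζ·s`, `t ↦ ζ⁻¹·t`. -/
noncomputable def cyclicAction (ζ : ℂ) : MvPolynomial (Fin 2) ℂ →ₐ[ℂ] MvPolynomial (Fin 2) ℂ :=
  aeval ![C ζ * X 0, C ζ⁻¹ * X 1]

/-!
`cyclicAction ζ` is diagonal on monomials: it multiplies `s^a t^b` by `ζ^a ζ⁻¹^b = ζ^(a-b)`.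
Hence `f` is invariant iff every monomial `s^a t^b` of `f` has `n ∣ a - b`, and such a monomial is
`(st)^b (s^n)^k` or `(st)^a (t^n)^k`. Conversely the generators are invariant, and invariants form
a subalgebra.
-/

section DiagonalAction

variable {R σ : Type*}

theorem aeval_C_mul_X_monomial [CommSemiring R] (w : σ → R) (d : σ →₀ ℕ) (c : R) :
    aeval (fun i => C (w i) * X i) (monomial d c) =
      monomial d ((d.prod fun i k => w i ^ k) * c) := by
  rw [aeval_monomial, monomial_eq, map_mul, map_finsuppProd, algebraMap_eq]
  simp only [mul_pow, Finsupp.prod_mul, map_pow]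
  ring

theorem coeff_aeval_C_mul_X [CommSemiring R] (w : σ → R) (f : MvPolynomial σ R) (m : σ →₀ ℕ) :
    coeff m (aeval (fun i => C (w i) * X i) f) = (m.prod fun i k => w i ^ k) * coeff m f := by
  classical
  induction f using MvPolynomial.induction_on' with
  | monomial d c =>
    rw [aeval_C_mul_X_monomial, coeff_monomial, coeff_monomial]
    split_ifs with h <;> simp [h]
  | add p q hp hq => rw [map_add, coeff_add, coeff_add, hp, hq, mul_add]

theorem aeval_C_mul_X_eq_self_iff [CommRing R] [IsDomain R] (w : σ → R) (f : MvPolynomial σ R) :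
    aeval (fun i => C (w i) * X i) f = f ↔ ∀ d ∈ f.support, (d.prod fun i k => w i ^ k) = 1 := by
  simp only [MvPolynomial.ext_iff, coeff_aeval_C_mul_X, mul_left_eq_self₀, mem_support_iff]
  exact forall_congr' fun d => or_iff_not_imp_right

end DiagonalAction

theorem pow_mul_pow_mem_adjoin {R A : Type*} [CommSemiring R] [CommSemiring A] [Algebra R A]
    (x y : A) {n a b : ℕ} (h : (n : ℤ) ∣ a - b) :
    x ^ a * y ^ b ∈ Algebra.adjoin R {x * y, x ^ n, y ^ n} := by
  wlog hba : b ≤ a generalizing x y a b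
  · have := this y x (dvd_sub_comm.mp h) (by omega)
    rwa [mul_comm, mul_comm (y ^ b), Set.pair_comm] at this
  obtain ⟨k, hk⟩ : n ∣ a - b := by rw [← Int.natCast_dvd_natCast, Nat.cast_sub hba]; exact h
  obtain rfl : a = b + n * k := by omega
  rw [show x ^ (b + n * k) * y ^ b = (x * y) ^ b * (x ^ n) ^ k by ring]
  exact mul_mem (pow_mem (Algebra.subset_adjoin (by simp)) _)
    (pow_mem (Algebra.subset_adjoin (by simp)) _)

theorem monomial_fin_two_eq_smul {R : Type*} [CommSemiring R] (d : Fin 2 →₀ ℕ) (c : R) :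
    monomial d c = c • (X 0 ^ d 0 * X 1 ^ d 1 : MvPolynomial (Fin 2) R) := by
  rw [monomial_eq, Finsupp.prod_pow, Fin.prod_univ_two, smul_eq_C_mul]

theorem IsPrimitiveRoot.pow_mul_inv_pow_eq_one_iff {G : Type*} [CommGroupWithZero G] {ζ : G}
    {n : ℕ} (h : IsPrimitiveRoot ζ n) (hζ : ζ ≠ 0) (a b : ℕ) :
    ζ ^ a * ζ⁻¹ ^ b = 1 ↔ (n : ℤ) ∣ a - b := by
  rw [← h.zpow_eq_one_iff_dvd, zpow_sub₀ hζ, zpow_natCast, zpow_natCast, inv_pow, div_eq_mul_inv]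

theorem cyclicAction_eq_aeval (ζ : ℂ) :
    cyclicAction ζ = aeval fun i => C (![ζ, ζ⁻¹] i) * X i := by
  rw [cyclicAction]
  congr 1
  funext i
  fin_cases i <;> rfl

theorem cyclicAction_eq_self_iff (ζ : ℂ) (f : MvPolynomial (Fin 2) ℂ) :
    cyclicAction ζ f = f ↔ ∀ d ∈ f.support, ζ ^ d 0 * ζ⁻¹ ^ d 1 = 1 := by
  rw [cyclicAction_eq_aeval, aeval_C_mul_X_eq_self_iff]
  simp only [Finsupp.prod_pow, Fin.prod_univ_two, Matrix.cons_val_zero, Matrix.cons_val_one]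

theorem cyclicAction_X_pow_mul_X_pow (ζ : ℂ) (a b : ℕ) :
    cyclicAction ζ (X 0 ^ a * X 1 ^ b) = C (ζ ^ a * ζ⁻¹ ^ b) * (X 0 ^ a * X 1 ^ b) := by
  simp only [cyclicAction, map_mul, map_pow, aeval_X, Matrix.cons_val_zero, Matrix.cons_val_one]
  ring

/-- The invariants of the cyclic group action on `ℂ[s,t]` are generated
by `s·t`, `s^n` and `t^n`. -/
theorem cyclic_invariants (n : ℕ) (hn : 1 ≤ n) (ζ : ℂ) (hζ : IsPrimitiveRoot ζ n)
    (f : MvPolynomial (Fin 2) ℂ) :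
    cyclicAction ζ f = f ↔
      f ∈ Algebra.adjoin ℂ ({X 0 * X 1, X 0 ^ n, X 1 ^ n} : Set (MvPolynomial (Fin 2) ℂ)) := by
  have hζ0 : ζ ≠ 0 := hζ.ne_zero (by omega)
  constructor
  · intro hf
    rw [f.as_sum]
    refine sum_mem fun d hd => ?_
    have hdvd : (n : ℤ) ∣ d 0 - d 1 :=
      (hζ.pow_mul_inv_pow_eq_one_iff hζ0 _ _).mp ((cyclicAction_eq_self_iff ζ f).mp hf d hd)
    rw [monomial_fin_two_eq_smul]
    exact Subalgebra.smul_mem _ (pow_mul_pow_mem_adjoin _ _ hdvd) _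
  · intro hf
    suffices h : Algebra.adjoin ℂ {X 0 * X 1, X 0 ^ n, X 1 ^ n} ≤
        AlgHom.equalizer (cyclicAction ζ) (AlgHom.id ℂ _) from h hf
    have fixed (a b : ℕ) (hab : (n : ℤ) ∣ a - b) :
        cyclicAction ζ (X 0 ^ a * X 1 ^ b) = X 0 ^ a * X 1 ^ b := by
      rw [cyclicAction_X_pow_mul_X_pow, (hζ.pow_mul_inv_pow_eq_one_iff hζ0 a b).mpr hab, map_one,
        one_mul]
    rw [Algebra.adjoin_le_iff]
    rintro _ (rfl | rfl | rfl)
    · simpa using fixed 1 1 (by simp)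
    · simpa using fixed n 0 (by simp)
    · simpa using fixed 0 n (by simp)
end
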